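/- Let S be a semigroup and F an idempotent filter on S. If A is strongly F-central and B is F-thick, then A ∩ B is F-central, i.e., A ∩ B is a member of some idempotent in the smallest ideal K(F̄). -/
import Mathlib


attribute [local instance] Ultrafilter.mul Ultrafilter.semigroup
  Ultrafilter.add Ultrafilter.addSemigroup

/-- The closure of `A ⊆ S` in `βS`: the set of ultrafilters containing `A`. -/
def ucl {S : Type} (A : Set S) : Set (Ultrafilter S) := {p | A ∈ p}

/-- The closed subset `F̄ = ⋂_{V ∈ F} cl V` of `βS` determined by a filter `F`. -/
def Fbar {S : Type} (F : Filter S) : Set (Ultrafilter S) := {p | (↑p : Filter S) ≤ F}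

/-- The dual (mesh) `F*` of a filter: sets meeting every member of `F`. -/
def FStar {S : Type} (F : Filter S) : Set (Set S) := {A | ∀ B ∈ F, (A ∩ B).Nonempty}

section Mul

variable {S : Type}

/-- `A` is thick: every finite set has a right translate inside `A`. -/
def IsThick [Mul S] (A : Set S) : Prop :=
  ∀ G : Finset S, ∃ x : S, ∀ t ∈ G, t * x ∈ A

/-- `A` is syndetic: finitely many translates of `A` cover `S`. -/
def IsSyndetic [Mul S] (A : Set S) : Prop :=
  ∃ G : Finset S, (⋃ t ∈ G, {y : S | t * y ∈ A}) = Set.univ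

/-- `A` is `F`-thick. -/
def FThick [Mul S] (F : Filter S) (A : Set S) : Prop :=
  ∃ V ∈ F, ∀ H : Finset S, ↑H ⊆ V → (⋂ t ∈ H, {y : S | t * y ∈ A}) ∈ FStar F

/-- `A` is `F`-syndetic. -/
def FSyndetic [Mul S] (F : Filter S) (A : Set S) : Prop :=
  ∀ V ∈ F, ∃ H : Finset S, ↑H ⊆ V ∧ (⋃ t ∈ H, {y : S | t * y ∈ A}) ∈ F

/-- `F` is an idempotent filter: `F ⊆ F · F`. -/
def IdemFilter [Mul S] (F : Filter S) : Prop :=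
  ∀ A ∈ F, {x : S | {y : S | x * y ∈ A} ∈ F} ∈ F

/-- `L` is a left ideal of the subsemigroup `T` of `βS`. -/
def IsLeftIdealIn [Semigroup S] (T L : Set (Ultrafilter S)) : Prop :=
  L.Nonempty ∧ L ⊆ T ∧ ∀ p ∈ T, ∀ q ∈ L, p * q ∈ L

/-- `L` is a minimal left ideal of the subsemigroup `T` of `βS`. -/
def IsMinLeftIdealIn [Semigroup S] (T L : Set (Ultrafilter S)) : Prop :=
  IsLeftIdealIn T L ∧ ∀ L', IsLeftIdealIn T L' → L' ⊆ L → L' = L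

/-- `R` is a right ideal of the subsemigroup `T` of `βS`. -/
def IsRightIdealIn [Semigroup S] (T R : Set (Ultrafilter S)) : Prop :=
  R.Nonempty ∧ R ⊆ T ∧ ∀ q ∈ T, ∀ p ∈ R, p * q ∈ R

/-- `R` is a minimal right ideal of the subsemigroup `T` of `βS`. -/
def IsMinRightIdealIn [Semigroup S] (T R : Set (Ultrafilter S)) : Prop :=
  IsRightIdealIn T R ∧ ∀ R', IsRightIdealIn T R' → R' ⊆ R → R' = R

/-- `I` is a two-sided ideal of the subsemigroup `T` of `βS`. -/
def IsIdealIn [Semigroup S] (T I : Set (Ultrafilter S)) : Prop :=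
  I.Nonempty ∧ I ⊆ T ∧ ∀ p ∈ T, ∀ q ∈ I, p * q ∈ I ∧ q * p ∈ I

/-- The smallest two-sided ideal `K(T)` of `T`. -/
def smallestIdealIn [Semigroup S] (T : Set (Ultrafilter S)) : Set (Ultrafilter S) :=
  ⋂₀ {I | IsIdealIn T I}

/-- `A` is strongly `F`-central. -/
def StronglyFCentral [Semigroup S] (F : Filter S) (A : Set S) : Prop :=
  ∀ L, IsMinLeftIdealIn (Fbar F) L → ∃ p ∈ L, p * p = p ∧ p ∈ ucl A

/-- A family of sets has the `F`-thick finite intersection property. -/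
def FThickFIP [Mul S] (F : Filter S) (𝒜 : Set (Set S)) : Prop :=
  ∀ T : Finset (Set S), ↑T ⊆ 𝒜 → FThick F (⋂₀ (T : Set (Set S)))

/-- A family of sets has the finite intersection property. -/
def HasFIP (𝒜 : Set (Set S)) : Prop :=
  ∀ T : Finset (Set S), ↑T ⊆ 𝒜 → (⋂₀ (T : Set (Set S))).Nonempty

end Mul

section Add

variable {S : Type}

/-- Additive version of `IsThick`. -/
def AddIsThick [Add S] (A : Set S) : Prop :=
  ∀ G : Finset S, ∃ x : S, ∀ t ∈ G, t + x ∈ A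

/-- Additive version of `IsSyndetic`. -/
def AddIsSyndetic [Add S] (A : Set S) : Prop :=
  ∃ G : Finset S, (⋃ t ∈ G, {y : S | t + y ∈ A}) = Set.univ

/-- Additive version of `FThick`. -/
def AddFThick [Add S] (F : Filter S) (A : Set S) : Prop :=
  ∃ V ∈ F, ∀ H : Finset S, ↑H ⊆ V → (⋂ t ∈ H, {y : S | t + y ∈ A}) ∈ FStar F

/-- Additive version of `FSyndetic`. -/
def AddFSyndetic [Add S] (F : Filter S) (A : Set S) : Prop :=
  ∀ V ∈ F, ∃ H : Finset S, ↑H ⊆ V ∧ (⋃ t ∈ H, {y : S | t + y ∈ A}) ∈ F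

/-- Additive version of `IsLeftIdealIn`. -/
def AddIsLeftIdealIn [AddSemigroup S] (T L : Set (Ultrafilter S)) : Prop :=
  L.Nonempty ∧ L ⊆ T ∧ ∀ p ∈ T, ∀ q ∈ L, p + q ∈ L

/-- Additive version of `IsMinLeftIdealIn`. -/
def AddIsMinLeftIdealIn [AddSemigroup S] (T L : Set (Ultrafilter S)) : Prop :=
  AddIsLeftIdealIn T L ∧ ∀ L', AddIsLeftIdealIn T L' → L' ⊆ L → L' = L

/-- Additive version of `IsRightIdealIn`. -/
def AddIsRightIdealIn [AddSemigroup S] (T R : Set (Ultrafilter S)) : Prop :=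
  R.Nonempty ∧ R ⊆ T ∧ ∀ q ∈ T, ∀ p ∈ R, p + q ∈ R

/-- Additive version of `IsMinRightIdealIn`. -/
def AddIsMinRightIdealIn [AddSemigroup S] (T R : Set (Ultrafilter S)) : Prop :=
  AddIsRightIdealIn T R ∧ ∀ R', AddIsRightIdealIn T R' → R' ⊆ R → R' = R

/-- Additive version of `IsIdealIn`. -/
def AddIsIdealIn [AddSemigroup S] (T I : Set (Ultrafilter S)) : Prop :=
  I.Nonempty ∧ I ⊆ T ∧ ∀ p ∈ T, ∀ q ∈ I, p + q ∈ I ∧ q + p ∈ I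

/-- Additive version of `smallestIdealIn`. -/
def addSmallestIdealIn [AddSemigroup S] (T : Set (Ultrafilter S)) : Set (Ultrafilter S) :=
  ⋂₀ {I | AddIsIdealIn T I}

/-- Additive version of `StronglyFCentral`. -/
def AddStronglyFCentral [AddSemigroup S] (F : Filter S) (A : Set S) : Prop :=
  ∀ L, AddIsMinLeftIdealIn (Fbar F) L → ∃ p ∈ L, p + p = p ∧ p ∈ ucl A

/-- Additive version of `FThickFIP`. -/
def AddFThickFIP [Add S] (F : Filter S) (𝒜 : Set (Set S)) : Prop :=
  ∀ T : Finset (Set S), ↑T ⊆ 𝒜 → AddFThick F (⋂₀ (T : Set (Set S)))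

end Add

section Aux

open Filter Set

variable {S : Type}

lemma mem_ultra_mul [Mul S] {p q : Ultrafilter S} {A : Set S} :
    A ∈ p * q ↔ {x | {y | x * y ∈ A} ∈ q} ∈ p := Iff.rfl

lemma isClosed_Fbar (F : Filter S) : IsClosed (Fbar F) := by
  have h : Fbar F = ⋂ A ∈ F.sets, {p : Ultrafilter S | A ∈ p} := by
    ext p
    simp only [Fbar, Set.mem_setOf_eq, Filter.le_def, Set.mem_iInter, Ultrafilter.mem_coe,
      Filter.mem_sets]
  rw [h]
  exact isClosed_biInter fun A _ => ultrafilter_isClosed_basic A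

lemma Fbar_nonempty (F : Filter S) [F.NeBot] : (Fbar F).Nonempty := by
  obtain ⟨u, hu⟩ := Ultrafilter.exists_le F
  exact ⟨u, hu⟩

lemma Fbar_mul_mem [Semigroup S] {F : Filter S} (hidem : IdemFilter F)
    {p q : Ultrafilter S} (hp : p ∈ Fbar F) (hq : q ∈ Fbar F) : p * q ∈ Fbar F := by
  intro A hA
  have h1 : {x : S | {y : S | x * y ∈ A} ∈ F} ∈ p := hp (hidem A hA)
  show A ∈ (p * q : Ultrafilter S)
  rw [mem_ultra_mul]
  exact Filter.mem_of_superset h1 fun x hx => hq hx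

/-- Every closed left ideal of `F̄` contains a minimal left ideal. -/
lemma exists_min_left_ideal [Semigroup S] {F : Filter S} (hidem : IdemFilter F)
    {L0 : Set (Ultrafilter S)} (hL0 : IsLeftIdealIn (Fbar F) L0) (hL0c : IsClosed L0) :
    ∃ L ⊆ L0, IsMinLeftIdealIn (Fbar F) L := by
  set 𝒮 : Set (Set (Ultrafilter S)) :=
    {L | IsLeftIdealIn (Fbar F) L ∧ IsClosed L ∧ L ⊆ L0} with h𝒮
  have hzorn : ∀ c ⊆ 𝒮, IsChain (· ⊆ ·) c → c.Nonempty →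
      ∃ lb ∈ 𝒮, ∀ s ∈ c, lb ⊆ s := by
    intro c hc hchain hcne
    refine ⟨⋂₀ c, ⟨⟨?_, ?_, ?_⟩, ?_, ?_⟩, fun s hs => Set.sInter_subset_of_mem hs⟩
    · -- nonempty by compactness
      have : Nonempty c := hcne.to_subtype
      have h1 : (⋂ (i : c), (i : Set (Ultrafilter S))).Nonempty := by
        apply IsCompact.nonempty_iInter_of_directed_nonempty_isCompact_isClosed
        · intro i j
          rcases hchain.total i.2 j.2 with h | h
          · exact ⟨i, Set.Subset.rfl, h⟩
          · exact ⟨j, h, Set.Subset.rfl⟩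
        · exact fun i => (hc i.2).1.1
        · exact fun i => (hc i.2).2.1.isCompact
        · exact fun i => (hc i.2).2.1
      rwa [Set.sInter_eq_iInter]
    · obtain ⟨s, hs⟩ := hcne
      exact (Set.sInter_subset_of_mem hs).trans (hc hs).1.2.1
    · intro p hp q hq
      rw [Set.mem_sInter] at hq ⊢
      exact fun s hs => (hc hs).1.2.2 p hp q (hq s hs)
    · exact isClosed_sInter fun s hs => (hc hs).2.1
    · obtain ⟨s, hs⟩ := hcne
      exact (Set.sInter_subset_of_mem hs).trans (hc hs).2.2
  obtain ⟨m, hmL0, hm⟩ := zorn_superset_nonempty 𝒮 hzorn L0 ⟨hL0, hL0c, Set.Subset.rfl⟩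
  refine ⟨m, hmL0, hm.1.1, ?_⟩
  intro L' hL' hL'm
  obtain ⟨r, hr⟩ := hL'.1
  have hrF : r ∈ Fbar F := hL'.2.1 hr
  set m' : Set (Ultrafilter S) := (· * r) '' Fbar F with hm'def
  have hm'𝒮 : m' ∈ 𝒮 := by
    refine ⟨⟨?_, ?_, ?_⟩, ?_, ?_⟩
    · obtain ⟨u, hu⟩ := hm.1.1.1
      have huF : u ∈ Fbar F := hm.1.1.2.1 hu
      exact ⟨u * r, u, huF, rfl⟩
    · rintro _ ⟨p, hp, rfl⟩
      exact Fbar_mul_mem hidem hp hrF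
    · rintro p hp _ ⟨p', hp', rfl⟩
      exact ⟨p * p', Fbar_mul_mem hidem hp hp', mul_assoc p p' r⟩
    · exact ((isClosed_Fbar F).isCompact.image (Ultrafilter.continuous_mul_left r)).isClosed
    · rintro _ ⟨p, hp, rfl⟩
      exact hmL0 (hL'm (hL'.2.2 p hp r hr))
  have hm'L' : m' ⊆ L' := by
    rintro _ ⟨p, hp, rfl⟩
    exact hL'.2.2 p hp r hr
  have hsub : m ⊆ m' := hm.2 hm'𝒮 (hm'L'.trans hL'm)
  exact Set.Subset.antisymm hL'm (hsub.trans hm'L')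

end Aux


theorem stmt8_aux {S : Type} [Semigroup S] (F : Filter S) [F.NeBot]
    (hidem : IdemFilter F) (A B : Set S)
    (hA : StronglyFCentral F A) (hB : FThick F B) :
    ∃ p : Ultrafilter S, p ∈ smallestIdealIn (Fbar F) ∧ p * p = p ∧ A ∩ B ∈ p := by
  classical
  obtain ⟨V, hVF, hV⟩ := hB
  set f : S → Set S := fun t => {y : S | t * y ∈ B} with hf
  set 𝒢 : Set (Set S) := F.sets ∪ (f '' V) with h𝒢
  -- the generated filter is proper
  have hgen : Filter.NeBot (Filter.generate 𝒢) := by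
    rw [Filter.generate_neBot_iff]
    intro t ht htfin
    have hsplit : t = (t ∩ F.sets) ∪ (t \ F.sets) := (Set.inter_union_diff t F.sets).symm
    have hW : ⋂₀ (t ∩ F.sets) ∈ F := by
      rw [Filter.sInter_mem (htfin.subset Set.inter_subset_left)]
      exact fun U hU => hU.2
    have hsub : t \ F.sets ⊆ f '' V := by
      intro u hu
      rcases ht hu.1 with h | h
      · exact absurd h hu.2
      · exact h
    obtain ⟨H0, hH0V, hH0fin, hH0⟩ :
        ∃ H0 ⊆ V, H0.Finite ∧ f '' H0 = t \ F.sets := by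
      have := (Set.exists_subset_image_finite_and
        (f := f) (s := V) (p := fun u => u = t \ F.sets)).mp
        ⟨t \ F.sets, hsub, htfin.subset Set.diff_subset, rfl⟩
      obtain ⟨u, hu, hufin, huf⟩ := this
      exact ⟨u, hu, hufin, huf⟩
    set H : Finset S := hH0fin.toFinset with hH
    have hHV : (H : Set S) ⊆ V := by rwa [hH, Set.Finite.coe_toFinset]
    have hstar := hV H hHV
    obtain ⟨x, hx⟩ := hstar _ hW
    refine ⟨x, ?_⟩
    rw [hsplit, Set.sInter_union]
    refine ⟨hx.2, ?_⟩
    rw [← hH0, Set.mem_sInter]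
    rintro _ ⟨s, hs, rfl⟩
    have : x ∈ ⋂ s' ∈ H, f s' := hx.1
    simp only [Set.mem_iInter] at this
    exact this s (by rwa [hH, Set.Finite.mem_toFinset])
  obtain ⟨q, hq⟩ := Ultrafilter.exists_le (Filter.generate 𝒢)
  have hq𝒢 : ∀ s ∈ 𝒢, s ∈ q := fun s hs => hq (Filter.GenerateSets.basic hs)
  have hqF : q ∈ Fbar F := fun s hs => hq𝒢 s (Or.inl hs)
  -- the left ideal inside cl B
  set L0 : Set (Ultrafilter S) := (· * q) '' Fbar F with hL0def
  have hL0B : L0 ⊆ ucl B := by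
    rintro _ ⟨p, hp, rfl⟩
    show B ∈ p * q
    rw [mem_ultra_mul]
    refine Filter.mem_of_superset (hp hVF) fun t ht => ?_
    exact hq𝒢 (f t) (Or.inr ⟨t, ht, rfl⟩)
  have hL0 : IsLeftIdealIn (Fbar F) L0 := by
    refine ⟨⟨q * q, q, hqF, rfl⟩, ?_, ?_⟩
    · rintro _ ⟨p, hp, rfl⟩
      exact Fbar_mul_mem hidem hp hqF
    · rintro p hp _ ⟨p', hp', rfl⟩
      exact ⟨p * p', Fbar_mul_mem hidem hp hp', mul_assoc p p' q⟩
  have hL0c : IsClosed L0 :=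
    ((isClosed_Fbar F).isCompact.image (Ultrafilter.continuous_mul_left q)).isClosed
  obtain ⟨L, hLL0, hLmin⟩ := exists_min_left_ideal hidem hL0 hL0c
  obtain ⟨p, hpL, hpp, hpA⟩ := hA L hLmin
  refine ⟨p, ?_, hpp, ?_⟩
  · -- p lies in every two-sided ideal
    intro I hI
    obtain ⟨q0, hq0⟩ := hI.1
    have hq0F : q0 ∈ Fbar F := hI.2.1 hq0
    obtain ⟨r0, hr0⟩ := hLmin.1.1
    have hr0F : r0 ∈ Fbar F := hLmin.1.2.1 hr0
    have hmem : q0 * r0 ∈ L ∩ I :=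
      ⟨hLmin.1.2.2 q0 hq0F r0 hr0, (hI.2.2 r0 hr0F q0 hq0).2⟩
    have hLI : IsLeftIdealIn (Fbar F) (L ∩ I) := by
      refine ⟨⟨q0 * r0, hmem⟩, Set.inter_subset_left.trans hLmin.1.2.1, ?_⟩
      intro a ha b hb
      exact ⟨hLmin.1.2.2 a ha b hb.1, (hI.2.2 a ha b hb.2).1⟩
    have heq : L ∩ I = L := hLmin.2 _ hLI Set.inter_subset_left
    have hpLI : p ∈ L ∩ I := by rw [heq]; exact hpL
    exact hpLI.2
  · have hpB : B ∈ p := hL0B (hLL0 hpL)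
    have hpA' : A ∈ p := hpA
    exact Ultrafilter.mem_coe.mp (Filter.inter_mem hpA' hpB)

/-- If `A` is strongly `F`-central and `B` is `F`-thick, then `A ∩ B` is
`F`-central, i.e. a member of some idempotent of `K(F̄)`. -/
theorem stmt8 {S : Type} [Semigroup S] (F : Filter S) [F.NeBot]
    (hidem : IdemFilter F) (A B : Set S)
    (hA : StronglyFCentral F A) (hB : FThick F B) :
    ∃ p : Ultrafilter S, p ∈ smallestIdealIn (Fbar F) ∧ p * p = p ∧ A ∩ B ∈ p := by
  exact stmt8_aux F hidem A B hA hB
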